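/- Let M be a finite connected matroid of positive rank n and K any field. Writing Ẑ_M(q,v) = q^n + a_{n-1}q^{n-1} + ⋯ + a_1 q + a_0 with a_i ∈ K[v], the coefficients a_0, a_1, …, a_{n-1} are algebraically independent over K. -/

import Mathlib

open Polynomial MvPolynomial

/-- A finite matroid, presented by its ground set and rank function. -/
structure FinMatroid (α : Type) [DecidableEq α] where
  E : Finset α
  r : Finset α → ℕ

namespace FinMatroid
variable {α : Type} [DecidableEq α]

/-- The rank axioms for a matroid. -/
def Valid (M : FinMatroid α) : Prop :=
  M.r ∅ = 0 ∧
  (∀ A, A ⊆ M.E → M.r A ≤ A.card) ∧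
  (∀ A B, A ⊆ B → B ⊆ M.E → M.r A ≤ M.r B) ∧
  (∀ A B, A ⊆ M.E → B ⊆ M.E → M.r (A ∪ B) + M.r (A ∩ B) ≤ M.r A + M.r B)

/-- The rank `r(M) = r_M(E)` of the matroid. -/
def rank (M : FinMatroid α) : ℕ := M.r M.E

/-- A matroid is connected iff its ground set is nonempty and it admits no
nontrivial separation `E = A ∪ (E \ A)` with `r(A) + r(E \ A) = r(E)`. -/
def Connected (M : FinMatroid α) : Prop :=
  M.E.Nonempty ∧
    ∀ A ⊆ M.E, A.Nonempty → A ≠ M.E → M.r A + M.r (M.E \ A) ≠ M.r M.E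

/-- Deletion `M \ e`. -/
def delete (M : FinMatroid α) (e : α) : FinMatroid α :=
  ⟨M.E \ {e}, M.r⟩

/-- Contraction `M / e`, with rank function `A ↦ r(A ∪ {e}) - r({e})`. -/
def contract (M : FinMatroid α) (e : α) : FinMatroid α :=
  ⟨M.E \ {e}, fun A => M.r (A ∪ {e}) - M.r {e}⟩

/-- Restriction `M | C`. -/
def restrict (M : FinMatroid α) (C : Finset α) : FinMatroid α :=
  ⟨C, M.r⟩

/-- The multivariate Tutte polynomial
`Ẑ_M(q, v) = ∑_{A ⊆ E} q^(r(M) - r_M(A)) ∏_{e ∈ A} v_e`,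
as a polynomial in `q` over the polynomial ring `R[v]`. -/
noncomputable def Zhat (M : FinMatroid α) (R : Type) [CommRing R] :
    Polynomial (MvPolynomial α R) :=
  ∑ A ∈ M.E.powerset,
    Polynomial.C (∏ e ∈ A, MvPolynomial.X e) * Polynomial.X ^ (M.rank - M.r A)

/-- The multivariate Tutte polynomial viewed over the rational function field `K(v)`. -/
noncomputable def ZhatF (M : FinMatroid α) (K : Type) [Field K] :
    Polynomial (FractionRing (MvPolynomial α K)) :=
  (Zhat M K).map (algebraMap (MvPolynomial α K) (FractionRing (MvPolynomial α K)))

end FinMatroid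

/-- `galIsFullSymm p n` says that the Galois group of `p` is the full symmetric group
on the `n` roots of `p`: the action on the roots in the splitting field gives an
isomorphism onto the full permutation group of the roots, and there are `n` roots. -/
def galIsFullSymm {F : Type} [Field F] (p : Polynomial F) (n : ℕ) : Prop :=
  letI : Fact ((p.map (algebraMap F p.SplittingField)).Splits) :=
    ⟨Polynomial.SplittingField.splits p⟩
  Function.Bijective (Polynomial.Gal.galActionHom p p.SplittingField) ∧
    Nat.card (p.rootSet p.SplittingField) = n

/-!
Send `v_e` to a fresh variable `x_e` for `e` in a basis `B` of `M` and to `0` otherwise. Only the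
subsets of `B` survive, and all of them are independent, so `Ẑ_M` specialises to
`∏_{b ∈ B} (q + x_b)`: the coefficient `a_i` becomes the elementary symmetric polynomial of degree
`n - i` in the `n` variables `x_b`. These are algebraically independent by the fundamental theorem
of symmetric polynomials, hence so are the `a_i`.
-/

namespace MvPolynomial

variable {σ R : Type} [CommRing R]

theorem algebraicIndependent_esymm [Fintype σ] {n : ℕ} (hn : n ≤ Fintype.card σ) :
    AlgebraicIndependent R (fun i : Fin n => esymm σ R (i + 1)) := by
  rw [algebraicIndependent_iff_injective_aeval]
  have h : ⇑(aeval fun i : Fin n => esymm σ R (i + 1)) =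
      Subtype.val ∘ esymmAlgHom σ R n := by
    funext p
    exact (esymmAlgHom_apply p).symm
  rw [h]
  exact Subtype.val_injective.comp (esymmAlgHom_injective R hn)

variable [DecidableEq σ]

noncomputable def varsOn (R : Type) [CommRing R] (B : Finset σ) : σ → MvPolynomial B R :=
  fun e => if h : e ∈ B then X ⟨e, h⟩ else 0

theorem prod_varsOn_eq_zero {A B : Finset σ} (hAB : ¬A ⊆ B) : ∏ e ∈ A, varsOn R B e = 0 := by
  obtain ⟨e, heA, heB⟩ := Finset.not_subset.1 hAB
  exact Finset.prod_eq_zero heA (dif_neg heB)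

theorem esymm_eq_sum_powersetCard_prod_varsOn (B : Finset σ) (k : ℕ) :
    esymm B R k = ∑ A ∈ B.powersetCard k, ∏ e ∈ A, varsOn R B e := by
  have hB : B.powersetCard k = (B.attach.powersetCard k).map
      (Finset.mapEmbedding (Function.Embedding.subtype (· ∈ B))).toEmbedding := by
    rw [← Finset.powersetCard_map, Finset.attach_map_val]
  rw [MvPolynomial.esymm, Finset.univ_eq_attach, hB, Finset.sum_map]
  refine Finset.sum_congr rfl fun t _ => ?_
  simp [varsOn]

end MvPolynomial

namespace FinMatroid

open Finset

variable {α : Type} [DecidableEq α] {M : FinMatroid α}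

namespace Valid

variable (hV : M.Valid)
include hV

theorem r_empty : M.r ∅ = 0 := hV.1

theorem r_le_card {A : Finset α} (hA : A ⊆ M.E) : M.r A ≤ A.card := hV.2.1 A hA

theorem r_mono {A B : Finset α} (hAB : A ⊆ B) (hB : B ⊆ M.E) : M.r A ≤ M.r B :=
  hV.2.2.1 A B hAB hB

theorem r_union_add_r_inter_le {A B : Finset α} (hA : A ⊆ M.E) (hB : B ⊆ M.E) :
    M.r (A ∪ B) + M.r (A ∩ B) ≤ M.r A + M.r B :=
  hV.2.2.2 A B hA hB

theorem r_insert_le {A : Finset α} {e : α} (hA : A ⊆ M.E) (he : e ∈ M.E) :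
    M.r (insert e A) ≤ M.r A + 1 := by
  have hsub := hV.r_union_add_r_inter_le (singleton_subset_iff.2 he) hA
  have hle := hV.r_le_card (singleton_subset_iff.2 he)
  rw [card_singleton] at hle
  rw [← insert_eq] at hsub
  omega

theorem exists_indep_subset_r_eq {S : Finset α} (hS : S ⊆ M.E) :
    ∃ I ⊆ S, M.r I = I.card ∧ M.r I = M.r S := by
  induction S using Finset.induction_on with
  | empty => exact ⟨∅, subset_rfl, by simp [hV.r_empty], rfl⟩
  | insert e S heS ih =>
    have he : e ∈ M.E := hS (mem_insert_self e S)
    have hSE : S ⊆ M.E := (subset_insert e S).trans hS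
    obtain ⟨I, hIS, hI, hIr⟩ := ih hSE
    have hmono : M.r S ≤ M.r (insert e S) := hV.r_mono (subset_insert e S) hS
    rcases (hV.r_insert_le hSE he).lt_or_eq with hlt | heq
    · exact ⟨I, hIS.trans (subset_insert e S), hI, by omega⟩
    · have heI : e ∉ I := fun h => heS (hIS h)
      have hIE : insert e I ⊆ M.E := insert_subset he (hIS.trans hSE)
      -- submodularity for `S` and `insert e I`, whose union is `insert e S` and meet is `I`
      have hsub := hV.r_union_add_r_inter_le hSE hIE
      rw [union_insert, union_eq_left.2 hIS, inter_insert_of_notMem heS,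
        inter_eq_right.2 hIS] at hsub
      have hle := hV.r_le_card hIE
      rw [card_insert_of_notMem heI] at hle
      refine ⟨insert e I, insert_subset_insert e hIS, ?_, by omega⟩
      rw [card_insert_of_notMem heI]
      omega

theorem r_eq_card_of_subset {I A : Finset α} (hIE : I ⊆ M.E) (hI : M.r I = I.card)
    (hAI : A ⊆ I) : M.r A = A.card := by
  have hsub := hV.r_union_add_r_inter_le (B := I \ A) (hAI.trans hIE) (sdiff_subset.trans hIE)
  rw [union_sdiff_of_subset hAI, inter_sdiff_self, hV.r_empty] at hsub
  have hA := hV.r_le_card (hAI.trans hIE)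
  have hIA := hV.r_le_card (sdiff_subset.trans hIE : I \ A ⊆ M.E)
  have hcard := card_sdiff_add_card_eq_card hAI
  omega

theorem exists_basis : ∃ B ⊆ M.E, B.card = M.rank ∧ ∀ A ⊆ B, M.r A = A.card := by
  obtain ⟨B, hBE, hB, hBr⟩ := hV.exists_indep_subset_r_eq subset_rfl
  exact ⟨B, hBE, hB ▸ hBr, fun A hAB => hV.r_eq_card_of_subset hBE hB hAB⟩

theorem coeff_Zhat (R : Type) [CommRing R] {i : ℕ} (hi : i ≤ M.rank) :
    (M.Zhat R).coeff i =
      ∑ A ∈ M.E.powerset with M.r A = M.rank - i, ∏ e ∈ A, MvPolynomial.X e := by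
  rw [Zhat, finsetSum_coeff, sum_filter]
  refine sum_congr rfl fun A hA => ?_
  have hrA : M.r A ≤ M.rank := hV.r_mono (mem_powerset.1 hA) subset_rfl
  rw [Polynomial.coeff_C_mul, Polynomial.coeff_X_pow]
  by_cases h : M.r A = M.rank - i
  · rw [if_pos (by omega), if_pos h, mul_one]
  · rw [if_neg (by omega), if_neg h, mul_zero]

end Valid

open MvPolynomial in
theorem aeval_varsOn_sum_prod_X_eq_esymm (R : Type) [CommRing R] {B : Finset α}
    (hBE : B ⊆ M.E) (hB : ∀ A ⊆ B, M.r A = A.card) (k : ℕ) :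
    MvPolynomial.aeval (varsOn R B)
      (∑ A ∈ M.E.powerset with M.r A = k, ∏ e ∈ A, (X e : MvPolynomial α R)) = esymm B R k := by
  rw [map_sum, esymm_eq_sum_powersetCard_prod_varsOn]
  simp_rw [map_prod, MvPolynomial.aeval_X]
  refine (sum_subset (fun A hA => ?_) fun A hA hAB => ?_).symm
  · obtain ⟨hAB, hcard⟩ := mem_powersetCard.1 hA
    exact mem_filter.2 ⟨mem_powerset.2 (hAB.trans hBE), (hB A hAB).trans hcard⟩
  · refine prod_varsOn_eq_zero fun hAB' => hAB (mem_powersetCard.2 ⟨hAB', ?_⟩)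
    exact (hB A hAB').symm.trans (mem_filter.1 hA).2

end FinMatroid

theorem stmt_12_general {α : Type} [DecidableEq α] (M : FinMatroid α) (hV : M.Valid)
    (n : ℕ) (hn : M.rank = n)
    (K : Type) [Field K] :
    AlgebraicIndependent K (fun i : Fin n => (M.Zhat K).coeff i) := by
  obtain ⟨B, hBE, hBcard, hB⟩ := hV.exists_basis
  refine AlgebraicIndependent.of_comp (MvPolynomial.aeval (varsOn K B)) ?_
  have hcoeff : MvPolynomial.aeval (varsOn K B) ∘ (fun i : Fin n => (M.Zhat K).coeff i) =
      (fun j : Fin n => esymm B K (j + 1)) ∘ Fin.rev := by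
    funext i
    have hi : (i : ℕ) ≤ M.rank := hn ▸ i.is_lt.le
    rw [Function.comp_apply, hV.coeff_Zhat K hi,
      FinMatroid.aeval_varsOn_sum_prod_X_eq_esymm K hBE hB, Function.comp_apply, Fin.val_rev]
    congr 1
    omega
  rw [hcoeff]
  exact (algebraicIndependent_esymm (by simp [hBcard, hn])).comp Fin.rev Fin.rev_injective

/-- for a connected matroid of positive rank `n`, the non-leading
coefficients `a_0, …, a_{n-1}` of `Ẑ_M = q^n + a_{n-1} q^{n-1} + ⋯ + a_0` are
algebraically independent over `K`. -/
theorem stmt_12 {α : Type} [DecidableEq α] (M : FinMatroid α) (hV : M.Valid)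
    (hC : M.Connected) (n : ℕ) (hn : M.rank = n) (hpos : 0 < n)
    (K : Type) [Field K] :
    AlgebraicIndependent K (fun i : Fin n => (M.Zhat K).coeff i) :=
  stmt_12_general M hV n hn K
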